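/- arXiv:2106.06387 — 4 statements merged into one kernel-verified Lean document; each statement's English description precedes it below -/
import Mathlib

section
/- For a square-free positive integer n, the normalizer in GL₂(ℚ) of the group G = {[[a, nb],[−b, a]] : a,b ∈ ℚ, a²+nb² ≠ 0} is the set of matrices of the form [[a, nb],[−b, a]] or [[a, nb],[b, −a]] with a,b ∈ ℚ and a²+nb² ≠ 0 (respectively −a²−nb² ≠ 0), and the quotient of this normalizer by G has exactly 2 elements. -/
/-!
The torus `G` is the centralizer in `GL₂` of `J = !![0, n; -1, 0]`, which satisfies `J² = -n`.
An element `w` of the normalizer conjugates `J` into `G`, and the conjugate still has trace `0`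
and determinant `n`; inside `G` this forces `w J w⁻¹ = ±J`. Thus `w` either commutes with `J`
(and lies in `G`) or anticommutes with it (the second family of matrices), and the sign is a
homomorphism from the normalizer onto `{±1}` with kernel `G`, the value `-1` being attained at
`diag(1, -1)`.
-/

open Matrix Subgroup

section Group

variable {G : Type*} [Group G] {j w : G}

theorem conj_eq_self_iff_mem_centralizer_singleton :
    w * j * w⁻¹ = j ↔ w ∈ centralizer {j} := by
  rw [mem_centralizer_singleton_iff, mul_inv_eq_iff_eq_mul]

theorem mem_normalizer_centralizer_singleton_of_conj [HasDistribNeg G]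
    (h : w * j * w⁻¹ = j ∨ w * j * w⁻¹ = -j) :
    w ∈ normalizer (centralizer {j} : Set G) := by
  intro g
  simp only [SetLike.mem_coe, mem_centralizer_singleton_iff, ← commute_iff_eq]
  rw [← Commute.conj_iff w]
  rcases h with h | h <;> simp only [h, Commute.neg_right_iff]

theorem relIndex_centralizer_singleton_normalizer_eq_two [HasDistribNeg G] {w₀ : G} (hj : -j ≠ j)
    (hN : ∀ w ∈ normalizer (centralizer {j} : Set G), w * j * w⁻¹ = j ∨ w * j * w⁻¹ = -j)
    (hw₀ : w₀ * j * w₀⁻¹ = -j) :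
    (centralizer {j}).relIndex (normalizer (centralizer {j} : Set G)) = 2 := by
  rw [relIndex, index_eq_two_iff]
  refine ⟨⟨w₀, mem_normalizer_centralizer_singleton_of_conj (.inr hw₀)⟩, fun ⟨b, hb⟩ => ?_⟩
  have hconj : b * w₀ * j * (b * w₀)⁻¹ = -(b * j * b⁻¹) := by
    rw [show b * w₀ * j * (b * w₀)⁻¹ = b * (w₀ * j * w₀⁻¹) * b⁻¹ by group, hw₀, mul_neg, neg_mul]
  simp only [mem_subgroupOf, MulMemClass.coe_mul, ← conj_eq_self_iff_mem_centralizer_singleton,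
    hconj, neg_eq_iff_eq_neg]
  rcases hN b hb with h | h <;> simp [h, hj, hj.symm]

end Group

section CommRing

variable {R : Type*} [CommRing R]

def torusGen (d : R) : Matrix (Fin 2) (Fin 2) R := !![0, d; -1, 0]

@[simp] theorem trace_torusGen (d : R) : (torusGen d).trace = 0 := by simp [torusGen, trace_fin_two]

@[simp] theorem det_torusGen (d : R) : (torusGen d).det = d := by simp [torusGen, det_fin_two]

theorem commute_torusGen_iff (d : R) (M : Matrix (Fin 2) (Fin 2) R) :
    Commute M (torusGen d) ↔ ∃ a b, M = !![a, d * b; -b, a] := by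
  constructor
  · intro h
    have hq : M 0 1 = -(d * M 1 0) := by
      simpa [torusGen, mul_apply, Fin.sum_univ_two, neg_eq_iff_eq_neg] using congrFun₂ h.eq 0 0
    have hs : M 1 1 = M 0 0 := by
      simpa [torusGen, mul_apply, Fin.sum_univ_two] using congrFun₂ h.eq 1 0
    refine ⟨M 0 0, -M 1 0, ?_⟩
    ext i j; fin_cases i <;> fin_cases j <;> simp [hq, hs]
  · rintro ⟨a, b, rfl⟩
    ext i j; fin_cases i <;> fin_cases j <;> simp [torusGen, mul_apply] <;> ring

theorem mul_torusGen_eq_neg_iff (d : R) (M : Matrix (Fin 2) (Fin 2) R) :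
    M * torusGen d = -(torusGen d * M) ↔ ∃ a b, M = !![a, d * b; b, -a] := by
  constructor
  · intro h
    have hq : M 0 1 = d * M 1 0 := by
      simpa [torusGen, mul_apply, Fin.sum_univ_two, vecMul, dotProduct] using congrFun₂ h 0 0
    have hs : M 1 1 = -M 0 0 := by
      simpa [torusGen, mul_apply, Fin.sum_univ_two, vecMul, dotProduct, neg_eq_iff_eq_neg] using
        congrFun₂ h 1 0
    refine ⟨M 0 0, M 1 0, ?_⟩
    ext i j; fin_cases i <;> fin_cases j <;> simp [hq, hs]
  · rintro ⟨a, b, rfl⟩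
    ext i j; fin_cases i <;> fin_cases j <;> simp [torusGen, mul_apply] <;> ring

end CommRing

section Field

variable {K : Type*} [Field K] {d : K}

theorem eq_torusGen_or_eq_neg_of_commute [NeZero (2 : K)] (hd : d ≠ 0)
    {M : Matrix (Fin 2) (Fin 2) K} (hM : Commute M (torusGen d)) (htr : M.trace = 0)
    (hdet : M.det = d) : M = torusGen d ∨ M = -torusGen d := by
  obtain ⟨a, b, rfl⟩ := (commute_torusGen_iff d M).1 hM
  have ha : a = 0 := by
    rw [trace_fin_two_of, ← two_mul] at htr
    exact (mul_eq_zero.1 htr).resolve_left two_ne_zero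
  have hb : b ^ 2 = 1 := by
    rw [det_fin_two_of] at hdet
    exact mul_left_cancel₀ hd (by linear_combination hdet - a * ha)
  subst ha
  rcases sq_eq_one_iff.1 hb with rfl | rfl
  · left; simp [torusGen]
  · right; ext i j; fin_cases i <;> fin_cases j <;> simp [torusGen]

def torusGenGL (hd : d ≠ 0) : GL (Fin 2) K :=
  GeneralLinearGroup.mkOfDetNeZero (torusGen d) (by rwa [det_torusGen])

theorem coe_torusGenGL (hd : d ≠ 0) : (torusGenGL hd : Matrix (Fin 2) (Fin 2) K) = torusGen d := rfl

theorem neg_torusGenGL_ne [NeZero (2 : K)] (hd : d ≠ 0) : -torusGenGL hd ≠ torusGenGL hd := by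
  intro h
  have h10 : (1 : K) = -1 := by
    simpa [coe_torusGenGL, torusGen] using
      congrArg (fun g : GL (Fin 2) K => (g : Matrix (Fin 2) (Fin 2) K) 1 0) h
  exact two_ne_zero (by linear_combination h10 : (2 : K) = 0)

theorem conj_torusGenGL_eq_self_iff (hd : d ≠ 0) (w : GL (Fin 2) K) :
    w * torusGenGL hd * w⁻¹ = torusGenGL hd ↔
      ∃ a b : K, a ^ 2 + d * b ^ 2 ≠ 0 ∧ (w : Matrix (Fin 2) (Fin 2) K) = !![a, d * b; -b, a] := by
  rw [mul_inv_eq_iff_eq_mul, Units.ext_iff, Units.val_mul, Units.val_mul, coe_torusGenGL,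
    ← commute_iff_eq, commute_torusGen_iff]
  refine exists₂_congr fun a b => ⟨fun h => ⟨?_, h⟩, And.right⟩
  have hdet := w.det_ne_zero
  rw [h, det_fin_two_of] at hdet
  exact fun h0 => hdet (by linear_combination h0)

theorem conj_torusGenGL_eq_neg_iff (hd : d ≠ 0) (w : GL (Fin 2) K) :
    w * torusGenGL hd * w⁻¹ = -torusGenGL hd ↔
      ∃ a b : K, a ^ 2 + d * b ^ 2 ≠ 0 ∧ (w : Matrix (Fin 2) (Fin 2) K) = !![a, d * b; b, -a] := by
  rw [mul_inv_eq_iff_eq_mul, neg_mul, Units.ext_iff, Units.val_mul, Units.val_neg, Units.val_mul,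
    coe_torusGenGL, mul_torusGen_eq_neg_iff]
  refine exists₂_congr fun a b => ⟨fun h => ⟨?_, h⟩, And.right⟩
  have hdet := w.det_ne_zero
  rw [h, det_fin_two_of] at hdet
  exact fun h0 => hdet (by linear_combination -h0)

theorem conj_torusGenGL_eq_or_eq_neg [NeZero (2 : K)] (hd : d ≠ 0) {w : GL (Fin 2) K}
    (hw : w ∈ normalizer (centralizer {torusGenGL hd} : Set (GL (Fin 2) K))) :
    w * torusGenGL hd * w⁻¹ = torusGenGL hd ∨ w * torusGenGL hd * w⁻¹ = -torusGenGL hd := by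
  have hmem : w * torusGenGL hd * w⁻¹ ∈ centralizer {torusGenGL hd} :=
    (hw _).1 (mem_centralizer_singleton_iff.2 rfl)
  rw [mem_centralizer_singleton_iff, ← commute_iff_eq, ← Commute.units_val_iff] at hmem
  simp only [Units.ext_iff, Units.val_mul, Units.val_neg, coe_torusGenGL] at hmem ⊢
  exact eq_torusGen_or_eq_neg_of_commute hd hmem (by rw [trace_units_conj, trace_torusGen])
    (by rw [det_units_conj, det_torusGen])

theorem mem_normalizer_centralizer_torusGenGL_iff [NeZero (2 : K)] (hd : d ≠ 0)
    (w : GL (Fin 2) K) :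
    w ∈ normalizer (centralizer {torusGenGL hd} : Set (GL (Fin 2) K)) ↔
      ∃ a b : K, a ^ 2 + d * b ^ 2 ≠ 0 ∧
        ((w : Matrix (Fin 2) (Fin 2) K) = !![a, d * b; -b, a] ∨
          (w : Matrix (Fin 2) (Fin 2) K) = !![a, d * b; b, -a]) := by
  simp only [and_or_left, exists_or]
  rw [← conj_torusGenGL_eq_self_iff hd, ← conj_torusGenGL_eq_neg_iff hd]
  exact ⟨conj_torusGenGL_eq_or_eq_neg hd, mem_normalizer_centralizer_singleton_of_conj⟩

theorem relIndex_centralizer_torusGenGL_normalizer [NeZero (2 : K)] (hd : d ≠ 0) :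
    (centralizer {torusGenGL hd}).relIndex
      (normalizer (centralizer {torusGenGL hd} : Set (GL (Fin 2) K))) = 2 :=
  relIndex_centralizer_singleton_normalizer_eq_two (neg_torusGenGL_ne hd)
    (fun _ => conj_torusGenGL_eq_or_eq_neg hd)
    ((conj_torusGenGL_eq_neg_iff hd (GeneralLinearGroup.mkOfDetNeZero !![1, 0; 0, -1] (by simp))).2
      ⟨1, 0, by simp, by simp⟩)

end Field

theorem normalizer_of_torus_general (n : ℕ) (hpos : 0 < n)
    (H : Subgroup (GL (Fin 2) ℚ))
    (hH : (H : Set (GL (Fin 2) ℚ)) =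
      {g : GL (Fin 2) ℚ | ∃ a b : ℚ, a ^ 2 + n * b ^ 2 ≠ 0 ∧
        (g : Matrix (Fin 2) (Fin 2) ℚ) = !![a, n * b; -b, a]}) :
    ((Subgroup.normalizer (H : Set (GL (Fin 2) ℚ))) : Set (GL (Fin 2) ℚ)) =
      {w : GL (Fin 2) ℚ | ∃ a b : ℚ, a ^ 2 + n * b ^ 2 ≠ 0 ∧
        ((w : Matrix (Fin 2) (Fin 2) ℚ) = !![a, n * b; -b, a] ∨
          (w : Matrix (Fin 2) (Fin 2) ℚ) = !![a, n * b; b, -a])} ∧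
    Nat.card ((Subgroup.normalizer (H : Set (GL (Fin 2) ℚ))) ⧸ H.subgroupOf (Subgroup.normalizer (H : Set (GL (Fin 2) ℚ)))) = 2 := by
  have hd : (n : ℚ) ≠ 0 := by positivity
  obtain rfl : H = centralizer {torusGenGL hd} := by
    ext g
    rw [← SetLike.mem_coe, hH, ← conj_eq_self_iff_mem_centralizer_singleton,
      conj_torusGenGL_eq_self_iff]
    rfl
  exact ⟨Set.ext (mem_normalizer_centralizer_torusGenGL_iff hd),
    relIndex_centralizer_torusGenGL_normalizer hd⟩

/-- For a square-free positive integer `n`, the normalizer in `GL₂(ℚ)` of the subgroup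
`G = {[[a, nb],[−b, a]] : a,b ∈ ℚ, a² + nb² ≠ 0}` consists exactly of the matrices of the
form `[[a, nb],[−b, a]]` or `[[a, nb],[b, −a]]` with `a² + nb² ≠ 0`, and the quotient of
this normalizer by `G` has exactly `2` elements. -/
theorem normalizer_of_torus (n : ℕ) (hn : Squarefree n) (hpos : 0 < n)
    (H : Subgroup (GL (Fin 2) ℚ))
    (hH : (H : Set (GL (Fin 2) ℚ)) =
      {g : GL (Fin 2) ℚ | ∃ a b : ℚ, a ^ 2 + n * b ^ 2 ≠ 0 ∧
        (g : Matrix (Fin 2) (Fin 2) ℚ) = !![a, n * b; -b, a]}) :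
    ((Subgroup.normalizer (H : Set (GL (Fin 2) ℚ))) : Set (GL (Fin 2) ℚ)) =
      {w : GL (Fin 2) ℚ | ∃ a b : ℚ, a ^ 2 + n * b ^ 2 ≠ 0 ∧
        ((w : Matrix (Fin 2) (Fin 2) ℚ) = !![a, n * b; -b, a] ∨
          (w : Matrix (Fin 2) (Fin 2) ℚ) = !![a, n * b; b, -a])} ∧
    Nat.card ((Subgroup.normalizer (H : Set (GL (Fin 2) ℚ))) ⧸ H.subgroupOf (Subgroup.normalizer (H : Set (GL (Fin 2) ℚ)))) = 2 :=
  normalizer_of_torus_general n hpos H hH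
end

section
/- Let T₁, …, T_{n+1} be ℚ-tori each isomorphic to the norm-one torus of a distinct imaginary quadratic field K_i = ℚ(√(−m_i)), where √(−m_1), …, √(−m_{n+1}) are linearly disjoint (i.e. [ℚ(√(−m_1),…,√(−m_{n+1})):ℚ] = 2^{n+1}). If M is a ℚ-subtorus of T₁ × ⋯ × T_{n+1} whose projection onto each factor T_i is surjective, then M = T₁ × ⋯ × T_{n+1}. -/
/-!
The kernel of `φ` is Galois-stable. Since `[ℚ(ω₁, …, ω_{n+1}) : ℚ] = 2^{n+1}`, the embeddings of
`ℚ(ω)` into `ℚ̄`, each of which sends every `ωᵢ` to `±ωᵢ`, realise every sign pattern, so some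
`σ ∈ Gal(ℚ̄/ℚ)` negates `ωᵢ` alone. For `x` in the kernel, `x - σx = 2xᵢeᵢ` is then in the kernel
too, and injectivity of `φ` on the `i`-th summand forces `xᵢ = 0`.
-/

open IntermediateField

theorem AlgHom.apply_eq_or_eq_neg_of_sq_eq {F E A : Type*} [CommSemiring F] [Semiring E]
    [CommRing A] [NoZeroDivisors A] [Algebra F E] [Algebra F A] (f : E →ₐ[F] A) {x : E} {y : A}
    {c : F} (hx : x ^ 2 = algebraMap F E c) (hy : y ^ 2 = algebraMap F A c) :
    f x = y ∨ f x = -y :=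
  sq_eq_sq_iff_eq_or_eq_neg.mp (by rw [← map_pow, hx, AlgHom.commutes, hy])

section SignAutomorphisms

variable {F A ι : Type*} [Field F] [Field A] [Algebra F A] {ω : ι → A}

variable (F ω) in
def adjoinRangeGenerator (i : ι) : adjoin F (Set.range ω) :=
  ⟨ω i, subset_adjoin F _ (Set.mem_range_self i)⟩

noncomputable def flippedGenerators [Fintype ι] (f : adjoin F (Set.range ω) →ₐ[F] A) :
    Finset ι := by
  classical exact {i | f (adjoinRangeGenerator F ω i) ≠ ω i}

variable {c : ι → F} (hω : ∀ i, ω i ^ 2 = algebraMap F A (c i))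
include hω

theorem algHom_adjoinRangeGenerator_eq_or_eq_neg (f : adjoin F (Set.range ω) →ₐ[F] A) (i : ι) :
    f (adjoinRangeGenerator F ω i) = ω i ∨ f (adjoinRangeGenerator F ω i) = -ω i :=
  f.apply_eq_or_eq_neg_of_sq_eq (Subtype.ext (hω i)) (hω i)

theorem injective_flippedGenerators [Fintype ι] :
    Function.Injective (flippedGenerators (F := F) (ω := ω)) := by
  intro f g hfg
  refine adjoin_algHom_ext F ?_
  rintro _ ⟨i, rfl⟩
  have hi : f (adjoinRangeGenerator F ω i) = ω i ↔ g (adjoinRangeGenerator F ω i) = ω i :=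
    not_iff_not.mp (by simpa [flippedGenerators] using congrArg (i ∈ ·) hfg)
  show f (adjoinRangeGenerator F ω i) = g (adjoinRangeGenerator F ω i)
  by_cases h : f (adjoinRangeGenerator F ω i) = ω i
  · rw [h, hi.mp h]
  · rw [(algHom_adjoinRangeGenerator_eq_or_eq_neg hω f i).resolve_left h,
      (algHom_adjoinRangeGenerator_eq_or_eq_neg hω g i).resolve_left (mt hi.mpr h)]

variable [CharZero F] [IsAlgClosure F A] [Fintype ι]

theorem bijective_flippedGenerators
    (hdisj : Module.finrank F (adjoin F (Set.range ω)) = 2 ^ Fintype.card ι) :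
    Function.Bijective (flippedGenerators (F := F) (ω := ω)) := by
  have : FiniteDimensional F (adjoin F (Set.range ω)) :=
    .of_finrank_pos (by rw [hdisj]; positivity)
  have : IsAlgClosed A := IsAlgClosure.isAlgClosed F
  refine (Fintype.bijective_iff_injective_and_card _).mpr ⟨injective_flippedGenerators hω, ?_⟩
  rw [AlgHom.card, hdisj, Fintype.card_finset]

theorem exists_algEquiv_apply_eq_ite_neg [DecidableEq ι]
    (hdisj : Module.finrank F (adjoin F (Set.range ω)) = 2 ^ Fintype.card ι) (S : Finset ι) :
    ∃ σ : A ≃ₐ[F] A, ∀ i, σ (ω i) = if i ∈ S then -ω i else ω i := by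
  classical
  obtain ⟨f, hf⟩ := (bijective_flippedGenerators hω hdisj).surjective S
  have : Normal F A := IsAlgClosure.normal F A
  refine ⟨.ofBijective (f.liftNormal A) (AlgHom.normal_bijective F A A _), fun i => ?_⟩
  have hlift : f.liftNormal A (ω i) = f (adjoinRangeGenerator F ω i) :=
    f.liftNormal_commutes A (adjoinRangeGenerator F ω i)
  rw [AlgEquiv.coe_ofBijective, hlift, ← hf]
  rcases algHom_adjoinRangeGenerator_eq_or_eq_neg hω f i with h | h <;>
    simp [flippedGenerators, h]

end SignAutomorphisms

theorem LinearMap.injective_of_map_update_neg_eq_zero {R M ι : Type*} [Ring R] [NoZeroDivisors R]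
    [CharZero R] [AddCommGroup M] [Module R M] [DecidableEq ι] (φ : (ι → R) →ₗ[R] M)
    (hflip : ∀ i x, φ x = 0 → φ (Function.update x i (-x i)) = 0)
    (hsingle : ∀ i c, φ (Pi.single i c) = 0 → c = 0) :
    Function.Injective φ := by
  refine (injective_iff_map_eq_zero φ).mpr fun x hx => funext fun i => ?_
  have hsub : x - Function.update x i (-x i) = Pi.single i (2 * x i) := by
    ext j
    rcases eq_or_ne j i with rfl | h
    · simp [two_mul]
    · simp [h]
  have h2 : 2 * x i = 0 := hsingle i _ (by rw [← hsub, map_sub, hx, hflip i x hx, sub_zero])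
  exact (mul_eq_zero.mp h2).resolve_left two_ne_zero

/-- Mathlib's instance is stated for `AlgebraicClosure.instAlgebra`, which is not reducibly
defeq to the algebra structure `DivisionRing.toRatAlgebra` found by instance search. -/
instance isAlgClosure_rat_algebraicClosure : IsAlgClosure ℚ (AlgebraicClosure ℚ) :=
  ⟨inferInstance, AlgebraicClosure.isAlgebraic ℚ⟩

/-- This is the statement on character modules: `Fin (n + 1) → ℤ` is the character module of
`T₁ × ⋯ × T_{n+1}`, with `σ` acting on the `i`-th summand by the sign `sᵢ` with `σ ωᵢ = sᵢ ωᵢ`;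
the subtorus `M` corresponds to the Galois-equivariant surjection `φ` onto its character module
`Q`, surjectivity of the projections to injectivity of `φ` on each summand, and `M = T` to
bijectivity of `φ`. -/
theorem subtorus_of_product_of_norm_one_tori_general (n : ℕ) (m : Fin (n + 1) → ℕ)
    (ω : Fin (n + 1) → AlgebraicClosure ℚ)
    (hω : ∀ i, ω i ^ 2 = -((m i : ℚ) : AlgebraicClosure ℚ))
    (hdisj : Module.finrank ℚ (IntermediateField.adjoin ℚ (Set.range ω)) = 2 ^ (n + 1))
    (Q : Type*) [AddCommGroup Q] [Module ℤ Q]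
    (φ : (Fin (n + 1) → ℤ) →ₗ[ℤ] Q)
    (hsurj : Function.Surjective φ)
    (hstab : ∀ (σ : AlgebraicClosure ℚ ≃ₐ[ℚ] AlgebraicClosure ℚ) (s : Fin (n + 1) → ℤ),
      (∀ i, σ (ω i) = ((s i : ℚ) : AlgebraicClosure ℚ) * ω i) →
      ∀ x : Fin (n + 1) → ℤ, φ x = 0 → φ (fun i => s i * x i) = 0)
    (hproj : ∀ (i : Fin (n + 1)) (c : ℤ), φ (Pi.single i c) = 0 → c = 0) :
    Function.Bijective φ := by
  refine ⟨φ.injective_of_map_update_neg_eq_zero (fun i x hx => ?_) hproj, hsurj⟩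
  obtain ⟨σ, hσ⟩ := exists_algEquiv_apply_eq_ite_neg (c := fun j => -(m j : ℚ))
    (fun j => by rw [hω, eq_ratCast, Rat.cast_neg]) (by simpa using hdisj) {i}
  convert hstab σ (fun j => if j = i then -1 else 1)
    (fun j => by split_ifs with h <;> simp [hσ, h]) x hx using 2
  ext j
  split_ifs with h <;> simp [h]

/-- Let `T₁, …, T_{n+1}` be `ℚ`-tori, each isomorphic to the norm-one torus of a distinct
imaginary quadratic field `Kᵢ = ℚ(ωᵢ)`, `ωᵢ² = −mᵢ`, where the `√(−mᵢ)` are linearly disjoint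
(`[K₁⋯K_{n+1} : ℚ] = 2^{n+1}`).  If `M` is a `ℚ`-subtorus of `T₁ × ⋯ × T_{n+1}` whose
projection onto each factor `Tᵢ` is surjective, then `M = T₁ × ⋯ × T_{n+1}`.

Via the anti-equivalence between `ℚ`-tori and finitely generated free `ℤ`-modules with
continuous `Gal(ℚ̄/ℚ)`-action, this is formalized on character modules: the character module of
`T₁ × ⋯ × T_{n+1}` is `Λ₁ ⊕ ⋯ ⊕ Λ_{n+1} = (Fin (n+1) → ℤ)`, with `σ ∈ Gal(ℚ̄/ℚ)` acting on
`Λᵢ` by the sign `sᵢ` with `σ(ωᵢ) = sᵢ·ωᵢ`; a subtorus `M` with surjective projections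
corresponds to a Galois-equivariant surjection `φ` onto the (finitely generated free) character
module `Q` of `M` which is injective on each summand `Λᵢ`; and the conclusion `M = T` says that
`φ` is bijective. -/
theorem subtorus_of_product_of_norm_one_tori (n : ℕ) (m : Fin (n + 1) → ℕ)
    (hm : ∀ i, Squarefree (m i) ∧ 0 < m i) (hminj : Function.Injective m)
    (ω : Fin (n + 1) → AlgebraicClosure ℚ)
    (hω : ∀ i, ω i ^ 2 = -((m i : ℚ) : AlgebraicClosure ℚ))
    (hdisj : Module.finrank ℚ (IntermediateField.adjoin ℚ (Set.range ω)) = 2 ^ (n + 1))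
    (Q : Type*) [AddCommGroup Q] [Module ℤ Q] [Module.Free ℤ Q] [Module.Finite ℤ Q]
    (φ : (Fin (n + 1) → ℤ) →ₗ[ℤ] Q)
    (hsurj : Function.Surjective φ)
    (hstab : ∀ (σ : AlgebraicClosure ℚ ≃ₐ[ℚ] AlgebraicClosure ℚ) (s : Fin (n + 1) → ℤ),
      (∀ i, σ (ω i) = ((s i : ℚ) : AlgebraicClosure ℚ) * ω i) →
      ∀ x : Fin (n + 1) → ℤ, φ x = 0 → φ (fun i => s i * x i) = 0)
    (hproj : ∀ (i : Fin (n + 1)) (c : ℤ), φ (Pi.single i c) = 0 → c = 0) :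
    Function.Bijective φ :=
  subtorus_of_product_of_norm_one_tori_general n m ω hω hdisj Q φ hsurj hstab hproj
end

section
/- Let k ⊆ F be fields with F/k algebraic, β algebraic over F with minimal polynomial p over F, and suppose p has coefficients in k, p splits in K = k(β), and K/k is Galois. If deg p = [K : k], then K ∩ F = k and the restriction map Gal(K/k) → Gal(F(β)/F) is an isomorphism; in particular if Gal(F(β)/F) is abelian then so is Gal(K/k). -/
/-!
Restricting to `K = k(β)` is a homomorphism `Gal(F(β)/F) → Gal(K/k)` (it is defined because `K/k`
is normal), and it is injective because `F(β)` is generated over `F` by `β ∈ K`. Since `p` is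
separable (it is `minpoly k β`, by the degree hypothesis) and splits in `K ⊆ F(β)`, both groups
have order `deg p`, so the restriction is an isomorphism. Surjectivity then says that every element
of `Gal(K/k)` fixes `K ∩ F`, so `K ∩ F = k` by Galois theory.
-/

open IntermediateField Polynomial

theorem Subfield.aeval_map_inclusion {Ω : Type*} [Field Ω] {k F : Subfield Ω} (hkF : k ≤ F)
    (p : k[X]) (x : Ω) : aeval x (p.map (Subfield.inclusion hkF)) = aeval x p := by
  rw [aeval_def, aeval_def, eval₂_map]
  rfl

theorem minpoly_eq_of_natDegree_eq_finrank {k Ω : Type*} [Field k] [Field Ω] [Algebra k Ω]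
    {β : Ω} {p : k[X]} (hp : p.Monic) (hroot : aeval β p = 0)
    (hdeg : p.natDegree = Module.finrank k k⟮β⟯) : p = minpoly k β := by
  have hβ : IsIntegral k β := ⟨p, hp, hroot⟩
  refine (eq_of_dvd_of_natDegree_le_of_leadingCoeff (minpoly.dvd k β hroot) ?_ ?_).symm
  · rw [hdeg, adjoin.finrank hβ]
  · rw [(minpoly.monic hβ).leadingCoeff, hp.leadingCoeff]

namespace IntermediateField

theorem adjoin_toSubfield_mono {Ω : Type*} [Field Ω] {k F : Subfield Ω} (hkF : k ≤ F)
    (S : Set Ω) : (adjoin k S).toSubfield ≤ (adjoin F S).toSubfield := by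
  rw [adjoin_toSubfield, adjoin_toSubfield]
  refine Subfield.closure_mono (Set.union_subset_union_left _ ?_)
  rintro _ ⟨c, rfl⟩
  exact ⟨⟨c, hkF c.2⟩, rfl⟩

variable {Ω : Type*} [Field Ω] {k F : Subfield Ω} (hkF : k ≤ F)

theorem card_gal_adjoin_simple_of_map_eq_minpoly {β : Ω} (hβ : IsIntegral F β) {p : k[X]}
    (hp : p.map (Subfield.inclusion hkF) = minpoly F β) (hsep : p.Separable)
    (hsplit : (p.map (algebraMap k k⟮β⟯)).Splits) :
    Nat.card Gal(F⟮β⟯/F) = p.natDegree := by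
  have := adjoin.finiteDimensional hβ
  have hsepF : IsSeparable F β := by
    rw [IsSeparable, ← hp]
    exact Separable.map hsep
  have hsplitL : ((minpoly F β).map (algebraMap F F⟮β⟯)).Splits := by
    let ι : k⟮β⟯ →+* F⟮β⟯ := Subfield.inclusion (adjoin_toSubfield_mono hkF {β})
    have h := hsplit.map ι
    rw [Polynomial.map_map] at h
    rw [← hp, Polynomial.map_map]
    exact h
  calc Nat.card Gal(F⟮β⟯/F) = Nat.card (F⟮β⟯ →ₐ[F] F⟮β⟯) :=
        Nat.card_congr (algEquivEquivAlgHom F F⟮β⟯)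
    _ = (minpoly F β).natDegree :=
        card_algHom_adjoin_integral F hβ hsepF hsplitL
    _ = p.natDegree := by rw [← hp, natDegree_map]

variable {K : IntermediateField k Ω} {L : IntermediateField F Ω}
  (hKL : K.toSubfield ≤ L.toSubfield)

def algHomRestrict (σ : L →ₐ[F] Ω) : K →ₐ[k] Ω where
  toFun x := σ ⟨x, hKL x.2⟩
  map_one' := map_one σ
  map_mul' x y := map_mul σ ⟨x, hKL x.2⟩ ⟨y, hKL y.2⟩
  map_zero' := map_zero σ
  map_add' x y := map_add σ ⟨x, hKL x.2⟩ ⟨y, hKL y.2⟩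
  commutes' c := σ.commutes ⟨c, hkF c.2⟩

variable [Normal k K]

noncomputable def galRestrict (σ : Gal(L/F)) : Gal(K/k) :=
  (algHomRestrict hkF hKL (L.val.comp σ.toAlgHom)).restrictNormal' K

theorem galRestrict_apply (σ : Gal(L/F)) (x : K) :
    (galRestrict hkF hKL σ x : Ω) = σ ⟨x, hKL x.2⟩ :=
  AlgHom.restrictNormal_commutes _ K x

noncomputable def galRestrictHom : Gal(L/F) →* Gal(K/k) where
  toFun := galRestrict hkF hKL
  map_one' := AlgEquiv.ext fun x => Subtype.ext (galRestrict_apply hkF hKL 1 x)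
  map_mul' σ τ := AlgEquiv.ext fun x => Subtype.ext <| by
    rw [AlgEquiv.mul_apply, galRestrict_apply, galRestrict_apply, AlgEquiv.mul_apply]
    congr 2
    exact Subtype.ext (galRestrict_apply hkF hKL τ x).symm

theorem galRestrictHom_apply (σ : Gal(L/F)) (x : K) :
    (galRestrictHom hkF hKL σ x : Ω) = σ ⟨x, hKL x.2⟩ :=
  galRestrict_apply hkF hKL σ x

theorem galRestrictHom_injective {S : Set Ω} (hS : S ⊆ K) (hL : L = adjoin F S) :
    Function.Injective (galRestrictHom hkF hKL) := by
  subst hL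
  refine (injective_iff_map_eq_one _).mpr fun σ hσ => ?_
  refine AlgEquiv.coe_toAlgHom_injective (adjoin_algHom_ext F fun x hx => Subtype.ext ?_)
  simpa [galRestrictHom_apply] using congr_arg (fun τ : Gal(K/k) => (τ ⟨x, hS hx⟩ : Ω)) hσ

theorem inter_eq_of_galRestrictHom_surjective [IsGalois k K]
    (h : Function.Surjective (galRestrictHom hkF hKL)) : (K : Set Ω) ∩ F = k := by
  refine Set.Subset.antisymm (fun x ⟨hxK, hxF⟩ => ?_) fun x hx => ⟨K.algebraMap_mem ⟨x, hx⟩, hkF hx⟩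
  have hfix : ∀ τ : Gal(K/k), τ ⟨x, hxK⟩ = ⟨x, hxK⟩ := by
    intro τ
    obtain ⟨σ, rfl⟩ := h τ
    exact Subtype.ext ((galRestrictHom_apply hkF hKL σ _).trans
      (congr_arg Subtype.val (σ.commutes ⟨x, hxF⟩)))
  obtain ⟨c, hc⟩ := (InfiniteGalois.mem_bot_iff_fixed _).mpr hfix
  rw [← show (c : Ω) = x from congr_arg Subtype.val hc]
  exact c.2

end IntermediateField

theorem galois_group_of_descended_extension_general
    {Ω : Type*} [Field Ω]
    (k F : Subfield Ω) (hkF : k ≤ F)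
    (β : Ω) (hβ : IsIntegral F β)
    (p₀ : Polynomial k)
    (hmap : p₀.map (Subfield.inclusion hkF) = minpoly F β)
    (hsplit : Polynomial.Splits
      (p₀.map (algebraMap k (IntermediateField.adjoin k ({β} : Set Ω)))))
    (hgal : IsGalois k (IntermediateField.adjoin k ({β} : Set Ω)))
    (hdeg : p₀.natDegree = Module.finrank k (IntermediateField.adjoin k ({β} : Set Ω))) :
    ((IntermediateField.adjoin k ({β} : Set Ω) : Set Ω) ∩ (F : Set Ω)) = (k : Set Ω) ∧
    (∃ e : (IntermediateField.adjoin k ({β} : Set Ω) ≃ₐ[k]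
              IntermediateField.adjoin k ({β} : Set Ω)) ≃*
            (IntermediateField.adjoin F ({β} : Set Ω) ≃ₐ[F]
              IntermediateField.adjoin F ({β} : Set Ω)),
      ∀ (σ : IntermediateField.adjoin k ({β} : Set Ω) ≃ₐ[k]
              IntermediateField.adjoin k ({β} : Set Ω))
        (x : Ω) (hx1 : x ∈ IntermediateField.adjoin k ({β} : Set Ω))
        (hx2 : x ∈ IntermediateField.adjoin F ({β} : Set Ω)),
        ((e σ) ⟨x, hx2⟩ : Ω) = (σ ⟨x, hx1⟩ : Ω)) ∧
    ((∀ σ τ : (IntermediateField.adjoin F ({β} : Set Ω) ≃ₐ[F]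
          IntermediateField.adjoin F ({β} : Set Ω)), σ * τ = τ * σ) →
      ∀ σ τ : (IntermediateField.adjoin k ({β} : Set Ω) ≃ₐ[k]
          IntermediateField.adjoin k ({β} : Set Ω)), σ * τ = τ * σ) := by
  have hroot : aeval β p₀ = 0 := by
    rw [← Subfield.aeval_map_inclusion hkF, hmap, minpoly.aeval]
  have hmonic : p₀.Monic :=
    (Subfield.inclusion hkF).injective.monic_map_iff.mpr (hmap ▸ minpoly.monic hβ)
  have hp₀ : p₀ = minpoly k β := minpoly_eq_of_natDegree_eq_finrank hmonic hroot hdeg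
  have := adjoin.finiteDimensional (⟨p₀, hmonic, hroot⟩ : IsIntegral k β)
  have hsep : p₀.Separable :=
    hp₀ ▸ isSeparable_of_mem_isSeparable (F := k) (E := Ω) (mem_adjoin_simple_self k β)
  have hcard : Nat.card Gal(F⟮β⟯/F) = Nat.card Gal(k⟮β⟯/k) := by
    rw [card_gal_adjoin_simple_of_map_eq_minpoly hkF hβ hmap hsep hsplit, hdeg,
      IsGalois.card_aut_eq_finrank]
  have hKL := adjoin_toSubfield_mono hkF {β}
  have hbij : Function.Bijective (galRestrictHom hkF hKL) :=
    (galRestrictHom_injective hkF hKL (Set.singleton_subset_iff.mpr (mem_adjoin_simple_self k β))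
      rfl).bijective_of_nat_card_le hcard.ge
  let e := MulEquiv.ofBijective _ hbij
  refine ⟨inter_eq_of_galRestrictHom_surjective hkF hKL hbij.2, ⟨e.symm, fun σ x hx1 hx2 => ?_⟩,
    fun hab σ τ => e.symm.injective (by rw [map_mul, map_mul, hab])⟩
  calc ((e.symm σ) ⟨x, hx2⟩ : Ω) = galRestrictHom hkF hKL (e.symm σ) ⟨x, hx1⟩ :=
        (galRestrictHom_apply hkF hKL (e.symm σ) ⟨x, hx1⟩).symm
    _ = σ ⟨x, hx1⟩ := by rw [← MulEquiv.ofBijective_apply _ hbij, e.apply_symm_apply]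

/-- Let `k ⊆ F` be fields (inside a fixed algebraically closed field `Ω`) with `F/k`
algebraic, and let `β ∈ Ω` be algebraic over `F` with minimal polynomial `p` over `F`.
Suppose `p` has coefficients in `k` (say `p = p₀` with `p₀ ∈ k[X]`), `p₀` splits in
`K = k(β)`, `K/k` is Galois, and `deg p = [K : k]`.  Then `K ∩ F = k` and restriction gives a
group isomorphism `Gal(K/k) ≅ Gal(F(β)/F)`; in particular if `Gal(F(β)/F)` is abelian then so
is `Gal(K/k)`. -/
theorem galois_group_of_descended_extension
    {Ω : Type*} [Field Ω] [IsAlgClosed Ω]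
    (k F : Subfield Ω) (hkF : k ≤ F)
    (halg : ∀ x : Ω, x ∈ F → IsAlgebraic k x)
    (β : Ω) (hβ : IsIntegral F β)
    (p₀ : Polynomial k)
    (hmap : p₀.map (Subfield.inclusion hkF) = minpoly F β)
    (hsplit : Polynomial.Splits
      (p₀.map (algebraMap k (IntermediateField.adjoin k ({β} : Set Ω)))))
    (hgal : IsGalois k (IntermediateField.adjoin k ({β} : Set Ω)))
    (hdeg : p₀.natDegree = Module.finrank k (IntermediateField.adjoin k ({β} : Set Ω))) :
    ((IntermediateField.adjoin k ({β} : Set Ω) : Set Ω) ∩ (F : Set Ω)) = (k : Set Ω) ∧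
    (∃ e : (IntermediateField.adjoin k ({β} : Set Ω) ≃ₐ[k]
              IntermediateField.adjoin k ({β} : Set Ω)) ≃*
            (IntermediateField.adjoin F ({β} : Set Ω) ≃ₐ[F]
              IntermediateField.adjoin F ({β} : Set Ω)),
      ∀ (σ : IntermediateField.adjoin k ({β} : Set Ω) ≃ₐ[k]
              IntermediateField.adjoin k ({β} : Set Ω))
        (x : Ω) (hx1 : x ∈ IntermediateField.adjoin k ({β} : Set Ω))
        (hx2 : x ∈ IntermediateField.adjoin F ({β} : Set Ω)),
        ((e σ) ⟨x, hx2⟩ : Ω) = (σ ⟨x, hx1⟩ : Ω)) ∧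
    ((∀ σ τ : (IntermediateField.adjoin F ({β} : Set Ω) ≃ₐ[F]
          IntermediateField.adjoin F ({β} : Set Ω)), σ * τ = τ * σ) →
      ∀ σ τ : (IntermediateField.adjoin k ({β} : Set Ω) ≃ₐ[k]
          IntermediateField.adjoin k ({β} : Set Ω)), σ * τ = τ * σ) :=
  galois_group_of_descended_extension_general k F hkF β hβ p₀ hmap hsplit hgal hdeg
end

section
/- Every element a of the finite ideles 𝔸_f^× of ℚ admits a unique factorization a = q·u with q a positive rational number and u ∈ Ẑ^× (the units of the profinite completion of ℤ); equivalently 𝔸_f^× ≅ ℚ_{>0} × Ẑ^×. -/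
/-!
A finite idele `a` has nonzero valuation at every prime and valuation `1` at almost every prime.
Since `ℤ` is a principal ideal domain, a finite product of powers of generators of the primes is
a rational number with exactly these valuations; replacing it by its absolute value gives `q > 0`,
and then `u = q⁻¹ a` has valuation `1`, i.e. is a unit of `ℤ_p`, at every `p`. For uniqueness, a
rational number of valuation `1` at every prime is a unit of `ℤ`, so `±1`, and positivity leaves
only `1`.
-/

open IsDedekindDomain IsDedekindDomain.HeightOneSpectrum WithZero

namespace IsDedekindDomain.HeightOneSpectrum

section PrincipalIdealRing

variable {R : Type*} [CommRing R] [IsPrincipalIdealRing R]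

theorem generator_ne_zero (v : HeightOneSpectrum R) :
    Submodule.IsPrincipal.generator v.asIdeal ≠ 0 :=
  mt (Submodule.IsPrincipal.eq_bot_iff_generator_eq_zero _).mpr v.ne_bot

variable [IsDedekindDomain R] {K : Type*} [Field K] [Algebra R K] [IsFractionRing R K]

theorem generator_notMem_asIdeal {v w : HeightOneSpectrum R} (hwv : w ≠ v) :
    Submodule.IsPrincipal.generator v.asIdeal ∉ w.asIdeal := by
  intro hmem
  have hle : v.asIdeal ≤ w.asIdeal := by
    rwa [← Ideal.span_singleton_generator v.asIdeal, Ideal.span_singleton_le_iff_mem]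
  exact hwv (HeightOneSpectrum.ext (v.isMaximal.eq_of_le w.isPrime.ne_top hle).symm)

theorem valuation_generator_self (v : HeightOneSpectrum R) :
    v.valuation K (algebraMap R K (Submodule.IsPrincipal.generator v.asIdeal)) = exp (-1) := by
  rw [valuation_of_algebraMap]
  exact v.intValuation_singleton (generator_ne_zero v)
    (Ideal.span_singleton_generator v.asIdeal).symm

theorem valuation_generator_of_ne {v w : HeightOneSpectrum R} (hwv : w ≠ v) :
    w.valuation K (algebraMap R K (Submodule.IsPrincipal.generator v.asIdeal)) = 1 := by
  rw [valuation_of_algebraMap, intValuation_eq_one_iff]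
  exact generator_notMem_asIdeal hwv

theorem exists_valuation_eq {f : HeightOneSpectrum R → ℤᵐ⁰} (hf₀ : ∀ v, f v ≠ 0)
    (hf₁ : ∀ᶠ v in Filter.cofinite, f v = 1) :
    ∃ k : Kˣ, ∀ v : HeightOneSpectrum R, v.valuation K k = f v := by
  classical
  let π : HeightOneSpectrum R → Kˣ := fun v ↦
    Units.mk0 (algebraMap R K (Submodule.IsPrincipal.generator v.asIdeal))
      ((map_ne_zero_iff _ (IsFractionRing.injective R K)).mpr (generator_ne_zero v))
  have hS := Filter.eventually_cofinite.mp hf₁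
  refine ⟨∏ v ∈ hS.toFinset, π v ^ (-log (f v)), fun w ↦ ?_⟩
  simp only [Units.coe_prod, Units.val_zpow_eq_zpow_val, map_prod, map_zpow₀, π, Units.val_mk0]
  by_cases hw : w ∈ hS.toFinset
  · rw [Finset.prod_eq_single_of_mem w hw fun v _ hvw ↦ by
      rw [valuation_generator_of_ne hvw.symm, one_zpow]]
    rw [valuation_generator_self, ← exp_zsmul, smul_neg, neg_smul, neg_neg, smul_eq_mul, mul_one,
      exp_log (hf₀ w)]
  · rw [Finset.prod_eq_one fun v hv ↦ by
      rw [valuation_generator_of_ne (ne_of_mem_of_not_mem hv hw).symm, one_zpow]]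
    simpa [eq_comm] using hw

end PrincipalIdealRing

variable {R : Type*} [CommRing R] [IsDedekindDomain R] {K : Type*} [Field K] [Algebra R K]
  [IsFractionRing R K]

theorem exists_units_algebraMap_eq_of_valuation_eq_one {k : K} (hk₀ : k ≠ 0)
    (hk : ∀ v : HeightOneSpectrum R, v.valuation K k = 1) :
    ∃ u : Rˣ, algebraMap R K u = k := by
  obtain ⟨x, hx⟩ := mem_integers_of_valuation_le_one K k fun v ↦ (hk v).le
  obtain ⟨y, hy⟩ := mem_integers_of_valuation_le_one K k⁻¹ fun v ↦ by
    rw [map_inv₀, hk v, inv_one]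
  have hxy : x * y = 1 := IsFractionRing.injective R K <| by
    rw [map_mul, hx, hy, mul_inv_cancel₀ hk₀, map_one]
  exact ⟨⟨x, y, hxy, mul_comm y x ▸ hxy⟩, hx⟩

end IsDedekindDomain.HeightOneSpectrum

namespace IsDedekindDomain.FiniteAdeleRing

variable {R : Type*} [CommRing R] [IsDedekindDomain R] {K : Type*} [Field K] [Algebra R K]
  [IsFractionRing R K]

theorem valued_algebraMap_mul_apply (k : K) (x : FiniteAdeleRing R K)
    (v : HeightOneSpectrum R) :
    Valued.v ((algebraMap K (FiniteAdeleRing R K) k * x) v) =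
      v.valuation K k * Valued.v (x v) := by
  change Valued.v ((k : v.adicCompletion K) * x v) = _
  rw [map_mul, valuedAdicCompletion_eq_valuation']

theorem valued_apply_mul_valued_inv_apply (u : (FiniteAdeleRing R K)ˣ)
    (v : HeightOneSpectrum R) :
    Valued.v ((u : FiniteAdeleRing R K) v) * Valued.v ((↑u⁻¹ : FiniteAdeleRing R K) v) = 1 := by
  rw [← map_mul]
  change Valued.v ((↑(u * u⁻¹) : FiniteAdeleRing R K) v) = 1
  rw [mul_inv_cancel, Units.val_one]
  exact map_one _

theorem apply_mem_adicCompletionIntegers_and_inv_iff (u : (FiniteAdeleRing R K)ˣ)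
    (v : HeightOneSpectrum R) :
    ((u : FiniteAdeleRing R K) v ∈ v.adicCompletionIntegers K ∧
        (↑u⁻¹ : FiniteAdeleRing R K) v ∈ v.adicCompletionIntegers K) ↔
      Valued.v ((u : FiniteAdeleRing R K) v) = 1 := by
  have h := valued_apply_mul_valued_inv_apply u v
  simp only [mem_adicCompletionIntegers]
  refine ⟨fun ⟨hu, hu'⟩ ↦ le_antisymm hu ?_, fun hu ↦ ⟨hu.le, ?_⟩⟩
  · exact h ▸ mul_le_of_le_one_right' hu'
  · rw [hu, one_mul] at h
    exact h.le

end IsDedekindDomain.FiniteAdeleRing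

theorem Rat.eq_of_valuation_eq {q q' : ℚ} (hq : 0 < q) (hq' : 0 < q')
    (h : ∀ v : HeightOneSpectrum ℤ, v.valuation ℚ q = v.valuation ℚ q') : q = q' := by
  obtain ⟨u, hu⟩ := exists_units_algebraMap_eq_of_valuation_eq_one (R := ℤ)
    (div_ne_zero hq.ne' hq'.ne') fun v ↦ by
      rw [map_div₀, h v, div_self ((Valuation.ne_zero_iff _).mpr hq'.ne')]
  rcases Int.units_eq_one_or u with rfl | rfl
  · simpa [div_eq_one_iff_eq hq'.ne', eq_comm] using hu
  · have := div_pos hq hq'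
    rw [← hu] at this
    norm_num at this

theorem Rat.exists_pos_valuation_eq {f : HeightOneSpectrum ℤ → ℤᵐ⁰} (hf₀ : ∀ v, f v ≠ 0)
    (hf₁ : ∀ᶠ v in Filter.cofinite, f v = 1) :
    ∃ q : ℚ, 0 < q ∧ ∀ v : HeightOneSpectrum ℤ, v.valuation ℚ q = f v := by
  obtain ⟨k, hk⟩ := exists_valuation_eq (K := ℚ) hf₀ hf₁
  refine ⟨|(k : ℚ)|, abs_pos.mpr k.ne_zero, fun v ↦ ?_⟩
  rcases abs_choice (k : ℚ) with h | h <;> rw [h]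
  · exact hk v
  · rw [Valuation.map_neg, hk v]

open IsDedekindDomain.FiniteAdeleRing

/-- Every finite idele of `ℚ` (unit of the finite adele ring `𝔸_f`) admits a unique
factorization `a = q·u` with `q` a positive rational number and `u ∈ Ẑ^×`, i.e. `u` a unit
which together with its inverse is everywhere integral; equivalently
`𝔸_f^× ≅ ℚ_{>0} × Ẑ^×`. -/
theorem finite_idele_factorization (a : (FiniteAdeleRing ℤ ℚ)ˣ) :
    ∃! p : ℚ × (FiniteAdeleRing ℤ ℚ)ˣ,
      0 < p.1 ∧
      (∀ v : HeightOneSpectrum ℤ,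
        ((p.2 : FiniteAdeleRing ℤ ℚ) v ∈ v.adicCompletionIntegers ℚ ∧
          ((↑(p.2⁻¹) : FiniteAdeleRing ℤ ℚ) v ∈ v.adicCompletionIntegers ℚ))) ∧
      (a : FiniteAdeleRing ℤ ℚ) =
        algebraMap ℚ (FiniteAdeleRing ℤ ℚ) p.1 * (p.2 : FiniteAdeleRing ℤ ℚ) := by
  obtain ⟨ha₀, ha₁⟩ := isUnit_iff.mp a.isUnit
  obtain ⟨q, hq, hqa⟩ := Rat.exists_pos_valuation_eq
    (f := fun v ↦ Valued.v ((a : FiniteAdeleRing ℤ ℚ) v))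
    (fun v ↦ (Valuation.ne_zero_iff _).mpr (ha₀ v)) ha₁
  let qₐ := unitEmbedding ℤ ℚ (Units.mk0 q hq.ne')
  have hau : (a : FiniteAdeleRing ℤ ℚ) = algebraMap ℚ _ q * ↑(qₐ⁻¹ * a) :=
    congrArg Units.val (mul_inv_cancel_left qₐ a).symm
  refine ⟨(q, qₐ⁻¹ * a), ⟨hq, fun v ↦ ?_, hau⟩, ?_⟩
  · have h := hqa v
    rw [hau, valued_algebraMap_mul_apply] at h
    rw [apply_mem_adicCompletionIntegers_and_inv_iff]
    exact (mul_eq_left₀ ((Valuation.ne_zero_iff _).mpr hq.ne')).mp h.symm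
  · rintro ⟨q', u'⟩ ⟨hq', hu', hau'⟩
    have hqq' : q' = q := Rat.eq_of_valuation_eq hq' hq fun v ↦ by
      rw [hqa v, hau', valued_algebraMap_mul_apply,
        (apply_mem_adicCompletionIntegers_and_inv_iff u' v).mp (hu' v), mul_one]
    subst hqq'
    have hq_isUnit : IsUnit (algebraMap ℚ (FiniteAdeleRing ℤ ℚ) q') := hq.ne'.isUnit.map _
    exact Prod.ext rfl (Units.ext (hq_isUnit.mul_left_cancel (hau'.symm.trans hau)))
end
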